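/- arXiv:2004.05925 — 2 statements merged into one kernel-verified Lean document; each statement's English description precedes it below -/
import Mathlib

section
/- Let P ≥ 1, let Δ be a symmetric positive definite P × P real matrix, and let L = diag(ℓ_1, …, ℓ_P) with ℓ_i ≥ 0. Let w* ∈ ℝ^P be a design (w*_i ≥ 0, Σ_i w*_i = 1) with M* = diag(w*_1, …, w*_P). If tr( M* (M* + Δ⁻¹)⁻¹ L (M* + Δ⁻¹)⁻¹ ) ≥ e_iᵀ (M* + Δ⁻¹)⁻¹ L (M* + Δ⁻¹)⁻¹ e_i for all i = 1, …, P, then w* minimizes the weighted A-criterion Φ_{A_w}(w) = tr( L (M(w) + Δ⁻¹)⁻¹ ) over all designs w, where M(w) = diag(w_1, …, w_P). -/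
/-!
Write `A = M(w) + Δ⁻¹`, `C = M(v) + Δ⁻¹` and `S = A⁻¹ L A⁻¹`. The identity
`C⁻¹ = A⁻¹ - A⁻¹ (C - A) A⁻¹ + (C⁻¹ - A⁻¹) C (C⁻¹ - A⁻¹)` exhibits `X ↦ tr(L X⁻¹)` as lying above
its tangent at `A` on positive definite matrices, so
`Φ(v) ≥ Φ(w) - tr((M(v) - M(w)) S) = Φ(w) - ∑ᵢ vᵢ Sᵢᵢ + ∑ᵢ wᵢ Sᵢᵢ`.
The hypothesis says that every `Sᵢᵢ` is at most `∑ᵢ wᵢ Sᵢᵢ`, hence so is the average `∑ᵢ vᵢ Sᵢᵢ`.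
-/

open Matrix

theorem Finset.sum_mul_le_of_forall_le {ι : Type*} (s : Finset ι) {v f : ι → ℝ} {c : ℝ}
    (hv : ∀ i ∈ s, 0 ≤ v i) (hv1 : ∑ i ∈ s, v i = 1) (hf : ∀ i ∈ s, f i ≤ c) :
    ∑ i ∈ s, v i * f i ≤ c :=
  calc ∑ i ∈ s, v i * f i ≤ ∑ i ∈ s, v i * c :=
        Finset.sum_le_sum fun i hi => mul_le_mul_of_nonneg_left (hf i hi) (hv i hi)
    _ = c := by rw [← Finset.sum_mul, hv1, one_mul]

namespace Matrix

variable {n : Type*} [Fintype n] [DecidableEq n]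

theorem trace_diagonal_mul {R : Type*} [NonUnitalNonAssocSemiring R] (d : n → R)
    (S : Matrix n n R) : (diagonal d * S).trace = ∑ i, d i * S i i := by
  simp [trace, diagonal_mul]

theorem trace_diagonal_mul_nonneg {ℓ : n → ℝ} (hℓ : ∀ i, 0 ≤ ℓ i) {S : Matrix n n ℝ}
    (hS : S.PosSemidef) : 0 ≤ (diagonal ℓ * S).trace := by
  rw [trace_diagonal_mul]
  exact Finset.sum_nonneg fun i _ => mul_nonneg (hℓ i) hS.diag_nonneg

theorem inv_eq_sub_add_of_isUnit_det {R : Type*} [CommRing R] {A C : Matrix n n R}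
    (hA : IsUnit A.det) (hC : IsUnit C.det) :
    C⁻¹ = A⁻¹ - A⁻¹ * (C - A) * A⁻¹ + (C⁻¹ - A⁻¹) * C * (C⁻¹ - A⁻¹) := by
  simp only [Matrix.mul_sub, Matrix.sub_mul, Matrix.mul_assoc, nonsing_inv_mul_cancel_left _ _ hC,
    mul_nonsing_inv _ hC, mul_nonsing_inv _ hA, Matrix.mul_one]
  abel

theorem posDef_diagonal_add_inv {w : n → ℝ} (hw : ∀ i, 0 ≤ w i) {Δ : Matrix n n ℝ}
    (hΔ : Δ.PosDef) : (diagonal w + Δ⁻¹).PosDef :=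
  PosDef.posSemidef_add (PosSemidef.diagonal fun i => hw i) hΔ.inv

theorem PosDef.trace_diagonal_mul_inv_sub_le {A C : Matrix n n ℝ} (hA : A.PosDef)
    (hC : C.PosDef) {ℓ : n → ℝ} (hℓ : ∀ i, 0 ≤ ℓ i) :
    (diagonal ℓ * A⁻¹).trace - ((C - A) * (A⁻¹ * diagonal ℓ * A⁻¹)).trace ≤
      (diagonal ℓ * C⁻¹).trace := by
  have hA' : IsUnit A.det := (isUnit_iff_isUnit_det A).mp hA.isUnit
  have hC' : IsUnit C.det := (isUnit_iff_isUnit_det C).mp hC.isUnit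
  have hX : (C⁻¹ - A⁻¹).IsHermitian := hC.isHermitian.inv.sub hA.isHermitian.inv
  have hrem : ((C⁻¹ - A⁻¹) * C * (C⁻¹ - A⁻¹)).PosSemidef := by
    simpa only [hX.eq] using hC.posSemidef.mul_mul_conjTranspose_same (C⁻¹ - A⁻¹)
  have htangent : (diagonal ℓ * (A⁻¹ * (C - A) * A⁻¹)).trace =
      ((C - A) * (A⁻¹ * diagonal ℓ * A⁻¹)).trace := by
    rw [show diagonal ℓ * (A⁻¹ * (C - A) * A⁻¹) = diagonal ℓ * A⁻¹ * ((C - A) * A⁻¹) by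
      simp only [Matrix.mul_assoc], trace_mul_comm]
    simp only [Matrix.mul_assoc]
  rw [inv_eq_sub_add_of_isUnit_det hA' hC', Matrix.mul_add, Matrix.mul_sub, trace_add, trace_sub,
    htangent]
  linarith [trace_diagonal_mul_nonneg hℓ hrem]

end Matrix

theorem stmt_7_general (P : ℕ)
    (Δ : Matrix (Fin P) (Fin P) ℝ) (hΔ : Δ.PosDef)
    (ℓ : Fin P → ℝ) (hℓ : ∀ i, 0 ≤ ℓ i)
    (w : Fin P → ℝ) (hw : ∀ i, 0 ≤ w i)
    (hopt : ∀ i : Fin P,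
      (Matrix.diagonal w * (Matrix.diagonal w + Δ⁻¹)⁻¹ * Matrix.diagonal ℓ *
          (Matrix.diagonal w + Δ⁻¹)⁻¹).trace ≥
        ((Matrix.diagonal w + Δ⁻¹)⁻¹ * Matrix.diagonal ℓ * (Matrix.diagonal w + Δ⁻¹)⁻¹) i i) :
    ∀ v : Fin P → ℝ, (∀ i, 0 ≤ v i) → ∑ i, v i = 1 →
      (Matrix.diagonal ℓ * (Matrix.diagonal w + Δ⁻¹)⁻¹).trace ≤
        (Matrix.diagonal ℓ * (Matrix.diagonal v + Δ⁻¹)⁻¹).trace := by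
  intro v hv hv1
  set A := diagonal w + Δ⁻¹
  set S := A⁻¹ * diagonal ℓ * A⁻¹
  have hS : ∀ i, S i i ≤ ∑ j, w j * S j j := fun i => by
    simpa only [S, Matrix.mul_assoc, trace_diagonal_mul] using hopt i
  have hfirst : ((diagonal v + Δ⁻¹ - A) * S).trace ≤ 0 := by
    rw [add_sub_add_right_eq_sub, Matrix.sub_mul, trace_sub, trace_diagonal_mul,
      trace_diagonal_mul, sub_nonpos]
    exact Finset.sum_mul_le_of_forall_le _ (fun i _ => hv i) hv1 fun i _ => hS i
  linarith [(posDef_diagonal_add_inv hw hΔ).trace_diagonal_mul_inv_sub_le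
    (posDef_diagonal_add_inv hv hΔ) hℓ]

/-- Sufficiency part of the equivalence theorem for the weighted A-criterion
    `Φ_{A_w}(v) = tr(L (M(v) + Δ⁻¹)⁻¹)` with `L = diag(ℓ₁,…,ℓ_P)`, `ℓᵢ ≥ 0`: if
    `tr(M(w)(M(w)+Δ⁻¹)⁻¹ L (M(w)+Δ⁻¹)⁻¹) ≥ eᵢᵀ (M(w)+Δ⁻¹)⁻¹ L (M(w)+Δ⁻¹)⁻¹ eᵢ`
    for all `i`, then `w` is optimal for the weighted A-criterion. -/
theorem stmt_7 (P : ℕ) (hP : 1 ≤ P)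
    (Δ : Matrix (Fin P) (Fin P) ℝ) (hΔ : Δ.PosDef)
    (ℓ : Fin P → ℝ) (hℓ : ∀ i, 0 ≤ ℓ i)
    (w : Fin P → ℝ) (hw : ∀ i, 0 ≤ w i) (hw1 : ∑ i, w i = 1)
    (hopt : ∀ i : Fin P,
      (Matrix.diagonal w * (Matrix.diagonal w + Δ⁻¹)⁻¹ * Matrix.diagonal ℓ *
          (Matrix.diagonal w + Δ⁻¹)⁻¹).trace ≥
        ((Matrix.diagonal w + Δ⁻¹)⁻¹ * Matrix.diagonal ℓ * (Matrix.diagonal w + Δ⁻¹)⁻¹) i i) :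
    ∀ v : Fin P → ℝ, (∀ i, 0 ≤ v i) → ∑ i, v i = 1 →
      (Matrix.diagonal ℓ * (Matrix.diagonal w + Δ⁻¹)⁻¹).trace ≤
        (Matrix.diagonal ℓ * (Matrix.diagonal v + Δ⁻¹)⁻¹).trace :=
  stmt_7_general P Δ hΔ ℓ hℓ w hw hopt
end

section
/- Let P ≥ 1, let Δ be a symmetric positive definite P × P real matrix, and let L = diag(ℓ_1, …, ℓ_P) with ℓ_i ≥ 0. Let w* be a design minimizing Φ_{A_w}(w) = tr( L (M(w) + Δ⁻¹)⁻¹ ) over all designs (w_i ≥ 0, Σ_i w_i = 1), with M(w) = diag(w_1, …, w_P). If i and i' are indices with w*_i > 0 and w*_{i'} > 0, then e_iᵀ (M(w*) + Δ⁻¹)⁻¹ L (M(w*) + Δ⁻¹)⁻¹ e_i = e_{i'}ᵀ (M(w*) + Δ⁻¹)⁻¹ L (M(w*) + Δ⁻¹)⁻¹ e_{i'}. -/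
/-! Shifting mass `t` from a support point `i` to a support point `i'` keeps `w` a design for
small `|t|`, so `t = 0` minimises `t ↦ tr (L (B + t D)⁻¹)`, where `B = M(w) + Δ⁻¹` and
`D = diag (e_{i'} - e_i)`. The derivative there is `-tr (B⁻¹ L B⁻¹ D)`, which is the difference
of the two diagonal entries of `B⁻¹ L B⁻¹`; it must vanish. -/

open Matrix

theorem hasDerivAt_ringInverse_add_smul {𝕜 R : Type*} [NontriviallyNormedField 𝕜] [NormedRing R]
    [HasSummableGeomSeries R] [NormedAlgebra 𝕜 R] {x : R} (hx : IsUnit x) (d : R) :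
    HasDerivAt (fun t : 𝕜 => Ring.inverse (x + t • d))
      (-(Ring.inverse x * d * Ring.inverse x)) 0 := by
  obtain ⟨u, rfl⟩ := hx
  have hline : HasDerivAt (fun t : 𝕜 => (u : R) + t • d) d 0 := by
    simpa using ((hasDerivAt_id (0 : 𝕜)).smul_const d).const_add (u : R)
  have h := (hasFDerivAt_ringInverse (𝕜 := 𝕜) u).comp_hasDerivAt_of_eq 0 hline (by simp)
  rw [Ring.inverse_unit]
  exact h

namespace Matrix
variable {n : Type*} [Fintype n] [DecidableEq n]

theorem hasDerivAt_trace_mul_inv_add_smul (A : Matrix n n ℝ) {B : Matrix n n ℝ} (hB : IsUnit B)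
    (D : Matrix n n ℝ) :
    HasDerivAt (fun t : ℝ => (A * (B + t • D)⁻¹).trace) (-(B⁻¹ * A * B⁻¹ * D).trace) 0 := by
  -- any norm will do; the ℓ∞ operator norm makes matrices a complete normed algebra
  let _ := Matrix.linftyOpNormedRing (n := n) (α := ℝ)
  let _ := Matrix.linftyOpNormedAlgebra (n := n) (α := ℝ) (R := ℝ)
  let T : Matrix n n ℝ →L[ℝ] ℝ :=
    ((traceLinearMap n ℝ ℝ).comp (LinearMap.mulLeft ℝ A)).toContinuousLinearMap
  have h := T.hasFDerivAt.comp_hasDerivAt 0 (hasDerivAt_ringInverse_add_smul (𝕜 := ℝ) hB D)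
  have hT : T (-(B⁻¹ * D * B⁻¹)) = -(B⁻¹ * A * B⁻¹ * D).trace := by
    simp only [T, LinearMap.coe_toContinuousLinearMap', LinearMap.comp_apply,
      LinearMap.mulLeft_apply, traceLinearMap_apply, mul_neg, trace_neg, ← mul_assoc]
    rw [trace_mul_cycle]
    simp only [mul_assoc]
  rw [← hT]
  simp only [nonsing_inv_eq_ringInverse] at h ⊢
  exact h

theorem trace_mul_diagonal_single_sub_single {R : Type*} [Ring R] (C : Matrix n n R)
    (i i' : n) : (C * diagonal (Pi.single i' 1 - Pi.single i 1)).trace = C i' i' - C i i := by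
  simp [trace, mul_diagonal, mul_sub, Finset.sum_sub_distrib, Pi.single_apply]

end Matrix

section MassTransfer

variable {ι : Type*} [DecidableEq ι]

theorem sum_add_smul_single_sub_single [Fintype ι] (w : ι → ℝ) (i i' : ι) (t : ℝ) :
    ∑ j, (w + t • (Pi.single i' 1 - Pi.single i 1) : ι → ℝ) j = ∑ j, w j := by
  simp [Finset.sum_add_distrib, Finset.sum_sub_distrib, ← Finset.mul_sum]

theorem add_smul_single_sub_single_nonneg {w : ι → ℝ} (hw : ∀ j, 0 ≤ w j) {i i' : ι} {t : ℝ}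
    (ht : t ∈ Set.Icc (-w i') (w i)) (j : ι) :
    0 ≤ (w + t • (Pi.single i' 1 - Pi.single i 1) : ι → ℝ) j := by
  obtain ⟨ht₁, ht₂⟩ := ht
  have hwj := hw j
  simp only [Pi.add_apply, Pi.smul_apply, Pi.sub_apply, Pi.single_apply, smul_eq_mul]
  split_ifs <;> subst_vars <;> linarith

end MassTransfer

theorem stmt_9_general (P : ℕ)
    (Δ : Matrix (Fin P) (Fin P) ℝ) (hΔ : Δ.PosDef)
    (ℓ : Fin P → ℝ)
    (w : Fin P → ℝ) (hw : ∀ i, 0 ≤ w i) (hw1 : ∑ i, w i = 1)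
    (hmin : ∀ v : Fin P → ℝ, (∀ i, 0 ≤ v i) → ∑ i, v i = 1 →
      (Matrix.diagonal ℓ * (Matrix.diagonal w + Δ⁻¹)⁻¹).trace ≤
        (Matrix.diagonal ℓ * (Matrix.diagonal v + Δ⁻¹)⁻¹).trace)
    (i i' : Fin P) (hi : 0 < w i) (hi' : 0 < w i') :
    ((Matrix.diagonal w + Δ⁻¹)⁻¹ * Matrix.diagonal ℓ * (Matrix.diagonal w + Δ⁻¹)⁻¹) i i =
      ((Matrix.diagonal w + Δ⁻¹)⁻¹ * Matrix.diagonal ℓ * (Matrix.diagonal w + Δ⁻¹)⁻¹) i' i' := by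
  set B := diagonal w + Δ⁻¹
  have hB : IsUnit B := (PosDef.posSemidef_add (posSemidef_diagonal_iff.mpr hw) hΔ.inv).isUnit
  set d : Fin P → ℝ := Pi.single i' 1 - Pi.single i 1
  have hlocal : IsLocalMin (fun t : ℝ => (diagonal ℓ * (B + t • diagonal d)⁻¹).trace) 0 := by
    filter_upwards [Icc_mem_nhds (neg_lt_zero.mpr hi') hi] with t ht
    have hv : diagonal (w + t • d) + Δ⁻¹ = B + t • diagonal d := by
      rw [← diagonal_smul, add_right_comm, diagonal_add]
      rfl
    have h := hmin (w + t • d) (add_smul_single_sub_single_nonneg hw ht)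
      (by rw [sum_add_smul_single_sub_single, hw1])
    simpa only [hv, zero_smul, add_zero] using h
  have hcrit := hlocal.hasDerivAt_eq_zero (hasDerivAt_trace_mul_inv_add_smul _ hB _)
  rw [trace_mul_diagonal_single_sub_single, neg_eq_zero, sub_eq_zero] at hcrit
  exact hcrit.symm

/-- for a design `w` that is optimal for the weighted A-criterion
    `Φ_{A_w}(v) = tr(L (M(v) + Δ⁻¹)⁻¹)` with `L = diag(ℓ₁,…,ℓ_P)`, `ℓᵢ ≥ 0`, any two
    support points `i, i'` (with `wᵢ > 0`, `w_{i'} > 0`) satisfy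
    `eᵢᵀ (M(w)+Δ⁻¹)⁻¹ L (M(w)+Δ⁻¹)⁻¹ eᵢ = e_{i'}ᵀ (M(w)+Δ⁻¹)⁻¹ L (M(w)+Δ⁻¹)⁻¹ e_{i'}`. -/
theorem stmt_9 (P : ℕ) (hP : 1 ≤ P)
    (Δ : Matrix (Fin P) (Fin P) ℝ) (hΔ : Δ.PosDef)
    (ℓ : Fin P → ℝ) (hℓ : ∀ i, 0 ≤ ℓ i)
    (w : Fin P → ℝ) (hw : ∀ i, 0 ≤ w i) (hw1 : ∑ i, w i = 1)
    (hmin : ∀ v : Fin P → ℝ, (∀ i, 0 ≤ v i) → ∑ i, v i = 1 →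
      (Matrix.diagonal ℓ * (Matrix.diagonal w + Δ⁻¹)⁻¹).trace ≤
        (Matrix.diagonal ℓ * (Matrix.diagonal v + Δ⁻¹)⁻¹).trace)
    (i i' : Fin P) (hi : 0 < w i) (hi' : 0 < w i') :
    ((Matrix.diagonal w + Δ⁻¹)⁻¹ * Matrix.diagonal ℓ * (Matrix.diagonal w + Δ⁻¹)⁻¹) i i =
      ((Matrix.diagonal w + Δ⁻¹)⁻¹ * Matrix.diagonal ℓ * (Matrix.diagonal w + Δ⁻¹)⁻¹) i' i' :=
  stmt_9_general P Δ hΔ ℓ w hw hw1 hmin i i' hi hi'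
end
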